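/- For every T > 0 there exists a constant C > 0 such that for every finitely supported pair of families of complex numbers (α_k)_{k∈(ℕ⁺)²} and (β_k)_{k∈(ℕ⁺)²}, the function φ(x₁,x₂,t) = ∑_{k=(k₁,k₂)} (α_k e^{iω_k t} + β_k e^{−iω_k t}) sin(k₁πx₁) sin(k₂πx₂), with ω_k = π√(k₁²+k₂²), satisfies ∫_0^T ∫_0^1 |∂φ/∂x₁(0,x₂,t)|² dx₂ dt ≤ C ∑_{k∈(ℕ⁺)²} (k₁² + k₂²)(|α_k|² + |β_k|²). -/

import Mathlib

/-!
Expanding in `x₂`, Parseval turns `∫₀¹ |∂ₓ₁φ(0,x₂,t)|² dx₂` into `½ ∑ₘ |∂ₓu_m(0,t)|²`, where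
`u_m(x,t) = ∑ₖ c_k(t) sin(kπx)` solves `∂ₜ²u = ∂ₓ²u - νu` on `(0,1)` with Dirichlet conditions
and `ν = (mπ)²`. For such `u` use the multiplier `(x - 1) ∂ₓu`: integrating `∂ₓ((x - 1)‖h‖²)` for
`h = ∂ₓu, u, ∂ₜu` shows that `X(t) = ∫₀¹ (x - 1) ⟪∂ₜu, ∂ₓu⟫ dx` satisfies
`X' = ½ |∂ₓu(0,t)|² - ¼ ∑ₖ (((kπ)² - ν)|c_k|² + |c_k'|²)`,
while `|X|` and the last sum are at most a quarter of the conserved energy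
`∑ₖ ((kπ)² + ν)|c_k|² + |c_k'|²`. Integrating over `[0,T]` bounds `∫₀ᵀ |∂ₓu(0,t)|²` by
`(2 + T)/2` times the energy, which is `2ω²(|a|² + |b|²)` per mode `c = a e^{iωt} + b e^{-iωt}`.
As `u` is a finite sine series, `X` is a finite combination of products `⟪c_j', c_k⟫` and is
differentiated term by term.
-/

/-- The frequency `ω_k = π√(k₁² + k₂²)`. -/
noncomputable def waveFreq (k : ℕ+ × ℕ+) : ℝ :=
  Real.pi * Real.sqrt ((k.1 : ℝ) ^ 2 + (k.2 : ℝ) ^ 2)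

/-- The explicit Fourier-series solution of the wave equation on the unit
square with Dirichlet boundary conditions. -/
noncomputable def waveSol (α β : ℕ+ × ℕ+ → ℂ) (x₁ x₂ t : ℝ) : ℂ :=
  ∑ᶠ k : ℕ+ × ℕ+,
    (α k * Complex.exp (Complex.I * (waveFreq k : ℂ) * (t : ℂ))
      + β k * Complex.exp (-(Complex.I * (waveFreq k : ℂ) * (t : ℂ))))
    * (Real.sin ((k.1 : ℝ) * Real.pi * x₁) : ℂ)
    * (Real.sin ((k.2 : ℝ) * Real.pi * x₂) : ℂ)

open Real Finset intervalIntegral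
open scoped RealInnerProductSpace

variable {E : Type*} [NormedAddCommGroup E] [InnerProductSpace ℝ E]

lemma integral_cos_int_mul_pi_mul (n : ℤ) :
    ∫ x in (0 : ℝ)..1, cos (n * π * x) = if n = 0 then 1 else 0 := by
  split_ifs with hn
  · simp [hn]
  · have hnπ : (n : ℝ) * π ≠ 0 := mul_ne_zero (Int.cast_ne_zero.mpr hn) pi_ne_zero
    simp [integral_comp_mul_left cos hnπ, integral_cos, sin_int_mul_pi]

lemma integral_sin_mul_sin_pnat (j k : ℕ+) :
    ∫ x in (0 : ℝ)..1, sin (j * π * x) * sin (k * π * x) = if j = k then 1 / 2 else 0 := by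
  have h : ∀ x : ℝ, sin (j * π * x) * sin (k * π * x)
      = (cos (((j - k : ℤ) : ℝ) * π * x) - cos (((j + k : ℤ) : ℝ) * π * x)) / 2 := by
    intro x
    push_cast
    rw [show ((j : ℝ) - k) * π * x = j * π * x - k * π * x by ring,
      show ((j : ℝ) + k) * π * x = j * π * x + k * π * x by ring, cos_sub, cos_add]
    ring
  have hjk : (j : ℤ) + k ≠ 0 := by positivity
  simp_rw [h, integral_div]
  rw [integral_sub (by apply Continuous.intervalIntegrable; fun_prop)
    (by apply Continuous.intervalIntegrable; fun_prop),
    integral_cos_int_mul_pi_mul, integral_cos_int_mul_pi_mul]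
  simp only [Int.sub_eq_zero, PNat.coe_inj, Nat.cast_inj, hjk, if_false]
  split_ifs <;> norm_num

lemma integral_cos_mul_cos_pnat (j k : ℕ+) :
    ∫ x in (0 : ℝ)..1, cos (j * π * x) * cos (k * π * x) = if j = k then 1 / 2 else 0 := by
  have h : ∀ x : ℝ, cos (j * π * x) * cos (k * π * x)
      = (cos (((j - k : ℤ) : ℝ) * π * x) + cos (((j + k : ℤ) : ℝ) * π * x)) / 2 := by
    intro x
    push_cast
    rw [show ((j : ℝ) - k) * π * x = j * π * x - k * π * x by ring,
      show ((j : ℝ) + k) * π * x = j * π * x + k * π * x by ring, cos_sub, cos_add]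
    ring
  have hjk : (j : ℤ) + k ≠ 0 := by positivity
  simp_rw [h, integral_div]
  rw [integral_add (by apply Continuous.intervalIntegrable; fun_prop)
    (by apply Continuous.intervalIntegrable; fun_prop),
    integral_cos_int_mul_pi_mul, integral_cos_int_mul_pi_mul]
  simp only [Int.sub_eq_zero, PNat.coe_inj, Nat.cast_inj, hjk, if_false]
  split_ifs <;> norm_num

lemma integral_mul_inner_sum_smul {ι : Type*} (s : Finset ι) {g : ℝ → ℝ} {f h : ι → ℝ → ℝ}
    (hg : Continuous g) (hf : ∀ i, Continuous (f i)) (hh : ∀ i, Continuous (h i))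
    (p q : ι → E) (a b : ℝ) :
    ∫ x in a..b, g x * ⟪∑ i ∈ s, f i x • p i, ∑ j ∈ s, h j x • q j⟫
      = ∑ i ∈ s, ∑ j ∈ s, (∫ x in a..b, g x * (f i x * h j x)) * ⟪p i, q j⟫ := by
  have hexpand : ∀ x, g x * ⟪∑ i ∈ s, f i x • p i, ∑ j ∈ s, h j x • q j⟫
      = ∑ i ∈ s, ∑ j ∈ s, g x * (f i x * h j x) * ⟪p i, q j⟫ := by
    intro x
    rw [sum_inner, mul_sum]
    refine sum_congr rfl fun i _ => ?_
    rw [inner_sum, mul_sum]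
    refine sum_congr rfl fun j _ => ?_
    rw [real_inner_smul_left, real_inner_smul_right]
    ring
  simp_rw [hexpand]
  rw [integral_finsetSum fun i _ => by apply Continuous.intervalIntegrable; fun_prop]
  refine sum_congr rfl fun i _ => ?_
  rw [integral_finsetSum fun j _ => by apply Continuous.intervalIntegrable; fun_prop]
  simp_rw [integral_mul_const]

lemma integral_norm_sq_sum_smul_of_orthogonal {ι : Type*} [DecidableEq ι] (s : Finset ι)
    {f : ι → ℝ → ℝ} (hf : ∀ i, Continuous (f i)) {a b r : ℝ}
    (horth : ∀ i ∈ s, ∀ j ∈ s, ∫ x in a..b, f i x * f j x = if i = j then r else 0)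
    (p : ι → E) :
    ∫ x in a..b, ‖∑ i ∈ s, f i x • p i‖ ^ 2 = r * ∑ i ∈ s, ‖p i‖ ^ 2 := by
  have h := integral_mul_inner_sum_smul s (g := fun _ => 1) continuous_const hf hf p p a b
  simp only [one_mul, real_inner_self_eq_norm_sq] at h
  rw [h, mul_sum]
  refine sum_congr rfl fun i hi => ?_
  rw [sum_eq_single_of_mem i hi fun j hj hji => by rw [horth i hi j hj, if_neg hji.symm, zero_mul],
    horth i hi i hi, if_pos rfl, real_inner_self_eq_norm_sq]

section Series

variable (S : Finset ℕ+)

noncomputable def sinSeries (c : ℕ+ → E) (x : ℝ) : E := ∑ k ∈ S, sin (k * π * x) • c k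

noncomputable def cosSeries (c : ℕ+ → E) (x : ℝ) : E := ∑ k ∈ S, cos (k * π * x) • c k

noncomputable def derivCoeff (c : ℕ+ → E) (k : ℕ+) : E := ((k : ℝ) * π) • c k

lemma hasDerivAt_sinSeries (c : ℕ+ → E) (x : ℝ) :
    HasDerivAt (sinSeries S c) (cosSeries S (derivCoeff c) x) x := by
  refine HasDerivAt.fun_sum fun k _ => ?_
  have h := (((hasDerivAt_id x).const_mul ((k : ℝ) * π)).sin).smul_const (c k)
  simpa [derivCoeff, smul_smul, mul_comm] using h

lemma hasDerivAt_cosSeries (c : ℕ+ → E) (x : ℝ) :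
    HasDerivAt (cosSeries S c) (-sinSeries S (derivCoeff c) x) x := by
  rw [sinSeries, ← sum_neg_distrib]
  refine HasDerivAt.fun_sum fun k _ => ?_
  have h := (((hasDerivAt_id x).const_mul ((k : ℝ) * π)).cos).smul_const (c k)
  simpa [derivCoeff, smul_smul, mul_comm] using h

lemma continuous_sinSeries (c : ℕ+ → E) : Continuous (sinSeries S c) := by
  unfold sinSeries; fun_prop

lemma continuous_cosSeries (c : ℕ+ → E) : Continuous (cosSeries S c) := by
  unfold cosSeries; fun_prop

lemma sinSeries_zero (c : ℕ+ → E) : sinSeries S c 0 = 0 := by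
  simp [sinSeries]

lemma cosSeries_zero (c : ℕ+ → E) : cosSeries S c 0 = ∑ k ∈ S, c k := by
  simp [cosSeries]

lemma integral_norm_sq_sinSeries (c : ℕ+ → E) :
    ∫ x in (0 : ℝ)..1, ‖sinSeries S c x‖ ^ 2 = 1 / 2 * ∑ k ∈ S, ‖c k‖ ^ 2 :=
  integral_norm_sq_sum_smul_of_orthogonal S (fun k => by fun_prop)
    (fun j _ k _ => integral_sin_mul_sin_pnat j k) c

lemma integral_norm_sq_cosSeries (c : ℕ+ → E) :
    ∫ x in (0 : ℝ)..1, ‖cosSeries S c x‖ ^ 2 = 1 / 2 * ∑ k ∈ S, ‖c k‖ ^ 2 :=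
  integral_norm_sq_sum_smul_of_orthogonal S (fun k => by fun_prop)
    (fun j _ k _ => integral_cos_mul_cos_pnat j k) c

lemma norm_derivCoeff_sq (c : ℕ+ → E) (k : ℕ+) :
    ‖derivCoeff c k‖ ^ 2 = ((k : ℝ) * π) ^ 2 * ‖c k‖ ^ 2 := by
  rw [derivCoeff, norm_smul, mul_pow, Real.norm_eq_abs, sq_abs]

end Series

lemma integral_sub_one_mul_inner_of_hasDerivAt {h h' : ℝ → E}
    (hh : ∀ x, HasDerivAt h (h' x) x) (hh' : Continuous h') :
    ∫ x in (0 : ℝ)..1, (x - 1) * ⟪h x, h' x⟫ = (‖h 0‖ ^ 2 - ∫ x in (0 : ℝ)..1, ‖h x‖ ^ 2) / 2 := by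
  have hc : Continuous h := continuous_iff_continuousAt.2 fun x => (hh x).continuousAt
  have hF : ∀ x ∈ Set.uIcc (0 : ℝ) 1, HasDerivAt (fun y => (y - 1) * ‖h y‖ ^ 2)
      (‖h x‖ ^ 2 + 2 * ((x - 1) * ⟪h x, h' x⟫)) x := by
    intro x _
    exact (((hasDerivAt_id' x).sub_const 1).fun_mul (hh x).norm_sq).congr_deriv (by ring)
  have hFTC := integral_eq_sub_of_hasDerivAt hF (by apply Continuous.intervalIntegrable; fun_prop)
  rw [integral_add (by apply Continuous.intervalIntegrable; fun_prop)
    (by apply Continuous.intervalIntegrable; fun_prop), integral_const_mul] at hFTC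
  norm_num at hFTC
  linarith

lemma abs_integral_sub_one_mul_inner_le {f g : ℝ → E} (hf : Continuous f) (hg : Continuous g) :
    |∫ x in (0 : ℝ)..1, (x - 1) * ⟪f x, g x⟫|
      ≤ ((∫ x in (0 : ℝ)..1, ‖f x‖ ^ 2) + ∫ x in (0 : ℝ)..1, ‖g x‖ ^ 2) / 2 := by
  have hpoint : ∀ x ∈ Set.Icc (0 : ℝ) 1, |(x - 1) * ⟪f x, g x⟫| ≤ (‖f x‖ ^ 2 + ‖g x‖ ^ 2) / 2 := by
    intro x hx
    have hx1 : |x - 1| ≤ 1 := abs_le.2 ⟨by linarith [hx.1], by linarith [hx.2]⟩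
    have hfg := abs_real_inner_le_norm (f x) (g x)
    rw [abs_mul]
    nlinarith [abs_nonneg (x - 1), abs_nonneg ⟪f x, g x⟫, sq_nonneg (‖f x‖ - ‖g x‖)]
  calc |∫ x in (0 : ℝ)..1, (x - 1) * ⟪f x, g x⟫|
      ≤ ∫ x in (0 : ℝ)..1, |(x - 1) * ⟪f x, g x⟫| := abs_integral_le_integral_abs zero_le_one
    _ ≤ ∫ x in (0 : ℝ)..1, (‖f x‖ ^ 2 + ‖g x‖ ^ 2) / 2 :=
        integral_mono_on zero_le_one (by apply Continuous.intervalIntegrable; fun_prop)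
          (by apply Continuous.intervalIntegrable; fun_prop) hpoint
    _ = _ := by
        rw [integral_div, integral_add (by apply Continuous.intervalIntegrable; fun_prop)
          (by apply Continuous.intervalIntegrable; fun_prop)]

lemma integral_le_of_hasDerivAt_sub {f g X : ℝ → ℝ} {A B T : ℝ}
    (hX : ∀ t, HasDerivAt X (f t - g t) t) (hf : Continuous f) (hg : Continuous g)
    (hXA : ∀ t, |X t| ≤ A) (hgB : ∀ t, g t ≤ B) (hT : 0 ≤ T) :
    ∫ t in (0 : ℝ)..T, f t ≤ 2 * A + T * B := by
  have hFTC := integral_eq_sub_of_hasDerivAt (fun t _ => hX t) ((hf.sub hg).intervalIntegrable 0 T)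
  rw [integral_sub (hf.intervalIntegrable 0 T) (hg.intervalIntegrable 0 T)] at hFTC
  have hgT : ∫ t in (0 : ℝ)..T, g t ≤ T * B := by
    simpa using integral_mono_on hT (hg.intervalIntegrable 0 T)
      (intervalIntegrable_const (μ := MeasureTheory.volume)) fun t _ => hgB t
  linarith [(abs_le.1 (hXA T)).2, (abs_le.1 (hXA 0)).1]

section Multiplier

variable (S : Finset ℕ+)

/-- `multiplierForm S (∂ₜc) c` is `∫₀¹ (x - 1) ⟪∂ₜu, ∂ₓu⟫ dx` for `u = sinSeries S c`. -/
noncomputable def multiplierForm (p q : ℕ+ → E) : ℝ :=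
  ∫ x in (0 : ℝ)..1, (x - 1) * ⟪sinSeries S p x, cosSeries S (derivCoeff q) x⟫

lemma multiplierForm_eq_sum (p q : ℕ+ → E) :
    multiplierForm S p q = ∑ i ∈ S, ∑ j ∈ S,
      (∫ x in (0 : ℝ)..1, (x - 1) * (sin (i * π * x) * cos (j * π * x))) * ⟪p i, derivCoeff q j⟫ :=
  integral_mul_inner_sum_smul S (by fun_prop) (fun _ => by fun_prop) (fun _ => by fun_prop) _ _ 0 1

lemma multiplierForm_add_smul_left (a b : ℝ) (p r q : ℕ+ → E) :
    multiplierForm S (fun k => a • p k + b • r k) q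
      = a * multiplierForm S p q + b * multiplierForm S r q := by
  simp only [multiplierForm_eq_sum, inner_add_left, real_inner_smul_left, mul_sum,
    ← sum_add_distrib]
  exact sum_congr rfl fun i _ => sum_congr rfl fun j _ => by ring

lemma hasDerivAt_multiplierForm {p q p' q' : ℕ+ → ℝ → E} {t : ℝ}
    (hp : ∀ k, HasDerivAt (p k) (p' k t) t) (hq : ∀ k, HasDerivAt (q k) (q' k t) t) :
    HasDerivAt (fun s => multiplierForm S (fun k => p k s) (fun k => q k s))
      (multiplierForm S (fun k => p' k t) (fun k => q k t)
        + multiplierForm S (fun k => p k t) (fun k => q' k t)) t := by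
  simp only [multiplierForm_eq_sum, ← sum_add_distrib, ← mul_add]
  refine HasDerivAt.fun_sum fun i _ => HasDerivAt.fun_sum fun j _ => ?_
  refine (((hp i).inner ℝ ((hq j).const_smul ((j : ℝ) * π))).const_mul _).congr_deriv ?_
  simp only [derivCoeff, Pi.smul_apply]
  ring

lemma multiplierForm_self (c : ℕ+ → E) :
    multiplierForm S c c = -(1 / 4 * ∑ k ∈ S, ‖c k‖ ^ 2) := by
  rw [multiplierForm, integral_sub_one_mul_inner_of_hasDerivAt (hasDerivAt_sinSeries S c)
      (continuous_cosSeries S _), sinSeries_zero, integral_norm_sq_sinSeries, norm_zero]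
  ring

lemma multiplierForm_derivCoeff_derivCoeff (c : ℕ+ → E) :
    multiplierForm S (derivCoeff (derivCoeff c)) c
      = (1 / 2 * ∑ k ∈ S, ‖derivCoeff c k‖ ^ 2 - ‖∑ k ∈ S, derivCoeff c k‖ ^ 2) / 2 := by
  have h := integral_sub_one_mul_inner_of_hasDerivAt (hasDerivAt_cosSeries S (derivCoeff c))
    (continuous_sinSeries S _).neg
  rw [cosSeries_zero, integral_norm_sq_cosSeries] at h
  have hswap : ∀ x : ℝ, (x - 1) * ⟪sinSeries S (derivCoeff (derivCoeff c)) x,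
      cosSeries S (derivCoeff c) x⟫ = -((x - 1) * ⟪cosSeries S (derivCoeff c) x,
        -sinSeries S (derivCoeff (derivCoeff c)) x⟫) := by
    intro x
    rw [inner_neg_right, real_inner_comm]
    ring
  rw [multiplierForm]
  simp_rw [hswap]
  rw [integral_neg, h]
  ring

lemma abs_multiplierForm_le (p q : ℕ+ → E) :
    |multiplierForm S p q| ≤ 1 / 4 * (∑ k ∈ S, ‖p k‖ ^ 2 + ∑ k ∈ S, ‖derivCoeff q k‖ ^ 2) := by
  have h := abs_integral_sub_one_mul_inner_le (continuous_sinSeries S p)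
    (continuous_cosSeries S (derivCoeff q))
  rw [integral_norm_sq_sinSeries, integral_norm_sq_cosSeries] at h
  rw [multiplierForm]
  linarith

end Multiplier

section Wave

variable (S : Finset ℕ+) {ν : ℝ} {c c' : ℕ+ → ℝ → E}

lemma mode_energy_eq_initial (hc : ∀ k t, HasDerivAt (c k) (c' k t) t)
    (hc' : ∀ k t, HasDerivAt (c' k) (-(((k : ℝ) * π) ^ 2 + ν) • c k t) t) (k : ℕ+) (t : ℝ) :
    (((k : ℝ) * π) ^ 2 + ν) * ‖c k t‖ ^ 2 + ‖c' k t‖ ^ 2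
      = (((k : ℝ) * π) ^ 2 + ν) * ‖c k 0‖ ^ 2 + ‖c' k 0‖ ^ 2 := by
  have hE : ∀ s, HasDerivAt (fun s => (((k : ℝ) * π) ^ 2 + ν) * ‖c k s‖ ^ 2 + ‖c' k s‖ ^ 2) 0 s :=
    fun s => (((hc k s).norm_sq.const_mul _).add (hc' k s).norm_sq).congr_deriv (by
      rw [inner_smul_right, real_inner_comm]; ring)
  exact is_const_of_deriv_eq_zero (fun s => (hE s).differentiableAt) (fun s => (hE s).deriv) t 0

lemma hasDerivAt_multiplierForm_of_wave (hc : ∀ k t, HasDerivAt (c k) (c' k t) t)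
    (hc' : ∀ k t, HasDerivAt (c' k) (-(((k : ℝ) * π) ^ 2 + ν) • c k t) t) (t : ℝ) :
    HasDerivAt (fun s => multiplierForm S (fun k => c' k s) (fun k => c k s))
      (1 / 2 * ‖∑ k ∈ S, ((k : ℝ) * π) • c k t‖ ^ 2
        - 1 / 4 * ∑ k ∈ S, ((((k : ℝ) * π) ^ 2 - ν) * ‖c k t‖ ^ 2 + ‖c' k t‖ ^ 2)) t := by
  have hsplit : (fun k : ℕ+ => -(((k : ℝ) * π) ^ 2 + ν) • c k t)
      = fun k => (-1 : ℝ) • derivCoeff (derivCoeff fun k => c k t) k + (-ν) • c k t := by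
    ext k
    simp only [derivCoeff, smul_smul]
    module
  refine (hasDerivAt_multiplierForm S (p' := fun k s => -(((k : ℝ) * π) ^ 2 + ν) • c k s)
    (fun k => hc' k t) (fun k => hc k t)).congr_deriv ?_
  rw [hsplit, multiplierForm_add_smul_left, multiplierForm_derivCoeff_derivCoeff,
    multiplierForm_self, multiplierForm_self]
  simp only [norm_derivCoeff_sq]
  simp only [derivCoeff, sum_add_distrib, sub_mul, sum_sub_distrib,
    ← mul_sum]
  ring

theorem integral_norm_sq_sum_smul_le_energy (hν : 0 ≤ ν) (hc : ∀ k t, HasDerivAt (c k) (c' k t) t)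
    (hc' : ∀ k t, HasDerivAt (c' k) (-(((k : ℝ) * π) ^ 2 + ν) • c k t) t) {T : ℝ} (hT : 0 ≤ T) :
    ∫ t in (0 : ℝ)..T, ‖∑ k ∈ S, ((k : ℝ) * π) • c k t‖ ^ 2
      ≤ (2 + T) / 2 * ∑ k ∈ S, ((((k : ℝ) * π) ^ 2 + ν) * ‖c k 0‖ ^ 2 + ‖c' k 0‖ ^ 2) := by
  set E₀ := ∑ k ∈ S, ((((k : ℝ) * π) ^ 2 + ν) * ‖c k 0‖ ^ 2 + ‖c' k 0‖ ^ 2)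
  have hcont : ∀ k, Continuous (c k) :=
    fun k => continuous_iff_continuousAt.2 fun t => (hc k t).continuousAt
  have hcont' : ∀ k, Continuous (c' k) :=
    fun k => continuous_iff_continuousAt.2 fun t => (hc' k t).continuousAt
  have henergy : ∀ t, ∑ k ∈ S, ((((k : ℝ) * π) ^ 2 + ν) * ‖c k t‖ ^ 2 + ‖c' k t‖ ^ 2) = E₀ :=
    fun t => sum_congr rfl fun k _ => mode_energy_eq_initial hc hc' k t
  have hX : ∀ t, |multiplierForm S (fun k => c' k t) (fun k => c k t)| ≤ E₀ / 4 := by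
    intro t
    refine (abs_multiplierForm_le S _ _).trans ?_
    simp only [norm_derivCoeff_sq]
    rw [← henergy t, ← sum_add_distrib]
    have : ∀ k ∈ S, ‖c' k t‖ ^ 2 + ((k : ℝ) * π) ^ 2 * ‖c k t‖ ^ 2
        ≤ (((k : ℝ) * π) ^ 2 + ν) * ‖c k t‖ ^ 2 + ‖c' k t‖ ^ 2 :=
      fun k _ => by nlinarith [mul_nonneg hν (sq_nonneg ‖c k t‖)]
    linarith [sum_le_sum this]
  have hW : ∀ t, 1 / 4 * ∑ k ∈ S, ((((k : ℝ) * π) ^ 2 - ν) * ‖c k t‖ ^ 2 + ‖c' k t‖ ^ 2)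
      ≤ E₀ / 4 := by
    intro t
    rw [← henergy t]
    have : ∀ k ∈ S, (((k : ℝ) * π) ^ 2 - ν) * ‖c k t‖ ^ 2 + ‖c' k t‖ ^ 2
        ≤ (((k : ℝ) * π) ^ 2 + ν) * ‖c k t‖ ^ 2 + ‖c' k t‖ ^ 2 :=
      fun k _ => by nlinarith [mul_nonneg hν (sq_nonneg ‖c k t‖)]
    linarith [sum_le_sum this]
  have h := integral_le_of_hasDerivAt_sub (hasDerivAt_multiplierForm_of_wave S hc hc')
    (by fun_prop) (by fun_prop) hX hW hT
  rw [integral_const_mul] at h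
  linarith

end Wave

section Oscillator

open Complex

noncomputable def oscillator (ω : ℝ) (a b : ℂ) (t : ℝ) : ℂ :=
  a * exp (I * ω * t) + b * exp (-(I * ω * t))

lemma hasDerivAt_oscillator (ω : ℝ) (a b : ℂ) (t : ℝ) :
    HasDerivAt (oscillator ω a b) (oscillator ω (I * ω * a) (-(I * ω * b)) t) t := by
  have hlin : HasDerivAt (fun s : ℝ => I * ω * (s : ℂ)) (I * ω) t := by
    simpa using (hasDerivAt_id t).ofReal_comp.const_mul (I * ω)
  refine ((hlin.cexp.const_mul a).add (hlin.fun_neg.cexp.const_mul b)).congr_deriv ?_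
  simp only [oscillator]
  ring

lemma hasDerivAt_oscillator_I_mul (ω : ℝ) (a b : ℂ) (t : ℝ) :
    HasDerivAt (oscillator ω (I * ω * a) (-(I * ω * b))) (-ω ^ 2 • oscillator ω a b t) t := by
  convert hasDerivAt_oscillator ω (I * ω * a) (-(I * ω * b)) t using 1
  simp only [oscillator, real_smul]
  push_cast
  linear_combination -(ω : ℂ) ^ 2 * (a * exp (I * ω * t) + b * exp (-(I * ω * t))) * I_sq

lemma energy_oscillator (ω : ℝ) (a b : ℂ) :
    ω ^ 2 * ‖oscillator ω a b 0‖ ^ 2 + ‖oscillator ω (I * ω * a) (-(I * ω * b)) 0‖ ^ 2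
      = 2 * ω ^ 2 * (‖a‖ ^ 2 + ‖b‖ ^ 2) := by
  have h0 : oscillator ω (I * ω * a) (-(I * ω * b)) 0 = (I * ω) * (a - b) := by
    simp [oscillator]; ring
  have h1 : oscillator ω a b 0 = a + b := by simp [oscillator]
  rw [h0, h1, norm_mul, norm_mul, norm_I, norm_real, Real.norm_eq_abs, one_mul, mul_pow, sq_abs]
  linear_combination ω ^ 2 * parallelogram_law_with_norm ℝ a b

@[fun_prop]
lemma continuous_oscillator (ω : ℝ) (a b : ℂ) : Continuous (oscillator ω a b) := by
  unfold oscillator; fun_prop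

end Oscillator

section Square

lemma support_subset_union_support {ι M N : Type*} [Zero M] [Zero N] {f : ι → M} {α β : ι → N}
    (h : ∀ k, α k = 0 → β k = 0 → f k = 0) :
    Function.support f ⊆ Function.support α ∪ Function.support β :=
  Function.support_subset_iff'.2 fun k hk => by
    simp only [Set.mem_union, Function.mem_support, not_or, not_not] at hk
    exact h k hk.1 hk.2

lemma exists_support_union_subset_product {ι κ M : Type*} [Zero M] {α β : ι × κ → M}
    (hα : (Function.support α).Finite) (hβ : (Function.support β).Finite) :
    ∃ (A : Finset ι) (B : Finset κ), Function.support α ∪ Function.support β ⊆ ↑(A ×ˢ B) := by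
  classical
  set s := (hα.union hβ).toFinset
  exact ⟨s.image Prod.fst, s.image Prod.snd,
    fun k hk => subset_product ((hα.union hβ).mem_toFinset.2 hk)⟩

open Complex

lemma waveFreq_sq (k : ℕ+ × ℕ+) : waveFreq k ^ 2 = ((k.1 : ℝ) * π) ^ 2 + ((k.2 : ℝ) * π) ^ 2 := by
  rw [waveFreq, mul_pow, Real.sq_sqrt (by positivity)]
  ring

lemma integral_norm_sq_sum_oscillator_le (A : Finset ℕ+) (m : ℕ+) (α β : ℕ+ × ℕ+ → ℂ) {T : ℝ}
    (hT : 0 ≤ T) :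
    ∫ t in (0 : ℝ)..T,
        ‖∑ k ∈ A, ((k : ℝ) * π) • oscillator (waveFreq (k, m)) (α (k, m)) (β (k, m)) t‖ ^ 2
      ≤ (2 + T) * π ^ 2
        * ∑ k ∈ A, ((k : ℝ) ^ 2 + (m : ℝ) ^ 2) * (‖α (k, m)‖ ^ 2 + ‖β (k, m)‖ ^ 2) := by
  refine (integral_norm_sq_sum_smul_le_energy A (sq_nonneg ((m : ℝ) * π))
    (fun k t => hasDerivAt_oscillator _ _ _ t) (fun k t => ?_) hT).trans (le_of_eq ?_)
  · rw [← waveFreq_sq (k, m)]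
    exact hasDerivAt_oscillator_I_mul _ _ _ t
  rw [mul_sum, mul_sum]
  refine sum_congr rfl fun k _ => ?_
  have h := energy_oscillator (waveFreq (k, m)) (α (k, m)) (β (k, m))
  rw [waveFreq_sq] at h
  simp only at h ⊢
  rw [h]
  ring

lemma waveSol_eq_sinSeries {α β : ℕ+ × ℕ+ → ℂ} {A B : Finset ℕ+}
    (hAB : Function.support α ∪ Function.support β ⊆ ↑(A ×ˢ B)) (x₁ x₂ t : ℝ) :
    waveSol α β x₁ x₂ t = sinSeries A (fun k => sinSeries B
      (fun m => oscillator (waveFreq (k, m)) (α (k, m)) (β (k, m)) t) x₂) x₁ := by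
  have hsupp : Function.support (fun k : ℕ+ × ℕ+ =>
      (α k * exp (I * waveFreq k * t) + β k * exp (-(I * waveFreq k * t)))
      * (Real.sin ((k.1 : ℝ) * π * x₁) : ℂ) * (Real.sin ((k.2 : ℝ) * π * x₂) : ℂ))
      ⊆ Function.support α ∪ Function.support β :=
    support_subset_union_support fun k hα hβ => by simp [hα, hβ]
  rw [waveSol, finsum_eq_sum_of_support_subset _ (hsupp.trans hAB), sum_product]
  simp only [sinSeries, oscillator, smul_sum, real_smul]
  exact sum_congr rfl fun k _ => sum_congr rfl fun m _ => by ring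

lemma deriv_waveSol_zero {α β : ℕ+ × ℕ+ → ℂ} {A B : Finset ℕ+}
    (hAB : Function.support α ∪ Function.support β ⊆ ↑(A ×ˢ B)) (x₂ t : ℝ) :
    deriv (fun x₁ => waveSol α β x₁ x₂ t) 0 = sinSeries B (fun m => ∑ k ∈ A,
      ((k : ℝ) * π) • oscillator (waveFreq (k, m)) (α (k, m)) (β (k, m)) t) x₂ := by
  simp_rw [waveSol_eq_sinSeries hAB]
  rw [(hasDerivAt_sinSeries A _ 0).deriv, cosSeries_zero]
  simp only [derivCoeff, sinSeries, smul_sum]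
  rw [sum_comm]
  exact sum_congr rfl fun m _ => sum_congr rfl fun k _ => smul_comm _ _ _

end Square

/-- hidden regularity (direct) inequality for the wave equation
on the unit square observed on the side `Γ₀ = {0} × (0,1)`, for any `T > 0`. -/
theorem direct_inequality_square (T : ℝ) (hT : 0 < T) :
    ∃ C > 0, ∀ α β : ℕ+ × ℕ+ → ℂ,
      (Function.support α).Finite → (Function.support β).Finite →
      ∫ t in (0 : ℝ)..T, ∫ x₂ in (0 : ℝ)..(1 : ℝ),
          ‖deriv (fun x₁ : ℝ => waveSol α β x₁ x₂ t) 0‖ ^ 2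
        ≤ C * ∑ᶠ k : ℕ+ × ℕ+,
            ((k.1 : ℝ) ^ 2 + (k.2 : ℝ) ^ 2) * (‖α k‖ ^ 2 + ‖β k‖ ^ 2) := by
  refine ⟨(2 + T) * π ^ 2 / 2, by positivity, fun α β hα hβ => ?_⟩
  obtain ⟨A, B, hAB⟩ := exists_support_union_subset_product hα hβ
  have hRHS : Function.support (fun k : ℕ+ × ℕ+ =>
      ((k.1 : ℝ) ^ 2 + (k.2 : ℝ) ^ 2) * (‖α k‖ ^ 2 + ‖β k‖ ^ 2)) ⊆ ↑(A ×ˢ B) :=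
    (support_subset_union_support fun k hα hβ => by simp [hα, hβ]).trans hAB
  simp_rw [deriv_waveSol_zero hAB, integral_norm_sq_sinSeries]
  rw [finsum_eq_sum_of_support_subset _ hRHS, sum_product_right, integral_const_mul,
    integral_finsetSum fun m _ => by apply Continuous.intervalIntegrable; fun_prop]
  refine (mul_le_mul_of_nonneg_left (sum_le_sum fun m _ =>
    integral_norm_sq_sum_oscillator_le A m α β hT.le) (by norm_num)).trans (le_of_eq ?_)
  rw [mul_sum, mul_sum]
  exact sum_congr rfl fun m _ => by ring
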